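/- Let P be a finite p-group and let R ≤ P be a subgroup with |P:R| ≤ m(P), where m(P) denotes the minimal degree of a non-linear irreducible character of P. Then every irreducible constituent η of the induced character (1_R)^P is linear, and consequently the derived subgroup P' is contained in R; in particular R is normal in P. -/

import Mathlib

open scoped BigOperators Classical

noncomputable section

/-- `χ` is the character of some irreducible complex representation of `G`. -/
def IsIrrChar {G : Type} [Group G] (χ : G → ℂ) : Prop :=
  ∃ V : FDRep ℂ G, CategoryTheory.Simple V ∧ FDRep.character V = χ

/-- The degree of a character, as a natural number. -/
def charDeg {G : Type} [Group G] (χ : G → ℂ) : ℕ := ⌊(χ 1).re⌋₊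

/-- `p`-part of a natural number: the largest power of `p` dividing `n`. -/
def pPart (p n : ℕ) : ℕ := p ^ (n.factorization p)

/-- Inner product of class functions on a finite group. -/
def charInner (G : Type) [Group G] [Fintype G] (α β : G → ℂ) : ℂ :=
  (Nat.card G : ℂ)⁻¹ * ∑ g : G, α g * (starRingEnd ℂ) (β g)

/-- Restriction of a class function to a subgroup. -/
def charRes {G : Type} [Group G] (H : Subgroup G) (χ : G → ℂ) : H → ℂ := fun h => χ (h : G)

/-- Induced class function. -/
def charInd {G : Type} [Group G] [Fintype G] (U : Subgroup G) (τ : U → ℂ) : G → ℂ :=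
  fun g => (Nat.card U : ℂ)⁻¹ * ∑ x : G, if h : x * g * x⁻¹ ∈ U then τ ⟨x * g * x⁻¹, h⟩ else 0

open CategoryTheory Module
open scoped commutatorElement

variable {G : Type} [Group G]

def subrepρ (V : FDRep ℂ G) (U : Submodule ℂ V) (hU : ∀ (g : G), ∀ x ∈ U, V.ρ g x ∈ U) :
    Representation ℂ G U where
  toFun g := (V.ρ g).restrict (fun x hx => hU g x hx)
  map_one' := by ext x; simp [LinearMap.restrict_apply]
  map_mul' g h := by ext x; simp [LinearMap.restrict_apply]

def subFDRep (V : FDRep ℂ G) (U : Submodule ℂ V) (hU : ∀ (g : G), ∀ x ∈ U, V.ρ g x ∈ U) :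
    FDRep ℂ G := FDRep.of (subrepρ V U hU)

def subIncl (V : FDRep ℂ G) (U : Submodule ℂ V) (hU : ∀ (g : G), ∀ x ∈ U, V.ρ g x ∈ U) :
    subFDRep V U hU ⟶ V where
  hom := FGModuleCat.ofHom U.subtype
  comm g := by ext x; rfl

theorem eq_top_of_simple (V : FDRep ℂ G) (hs : Simple V) (U : Submodule ℂ V)
    (hU : ∀ (g : G), ∀ x ∈ U, V.ρ g x ∈ U) (hne : U ≠ ⊥) : U = ⊤ := by
  classical
  set f : subFDRep V U hU ⟶ V := subIncl V U hU with hf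
  obtain ⟨u, huU, hune⟩ := Submodule.exists_mem_ne_zero_of_ne_bot hne
  have hfne : f ≠ 0 := by
    intro h0
    apply hune
    have : f.hom ⟨u, huU⟩ = (0 : V) := by rw [h0]; rfl
    exact this
  have hmono : Mono f := by
    constructor
    intro Z g h hgh
    ext z
    have := congrArg Action.Hom.hom hgh
    have := ConcreteCategory.congr_hom this z
    simp only [Action.comp_hom] at this
    exact Subtype.ext (by exact this)
  have hiso : IsIso f := (hs.mono_isIso_iff_nonzero f).mpr hfne
  rw [eq_top_iff]
  intro v _
  have hinv := IsIso.inv_hom_id f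
  have := congrArg Action.Hom.hom hinv
  have h2 := ConcreteCategory.congr_hom this v
  simp only [Action.comp_hom, Action.id_hom] at h2
  have : f.hom ((inv f).hom v) = v := h2
  rw [← this]
  exact ((inv f).hom v).2

theorem simple_of_irreducible (V : FDRep ℂ G) (hnz : ∃ v : V, v ≠ 0)
    (hirr : ∀ U : Submodule ℂ V, (∀ (g : G), ∀ x ∈ U, V.ρ g x ∈ U) → U ≠ ⊥ → U = ⊤) :
    Simple V := by
  classical
  constructor
  intro Y f hmono
  constructor
  · -- IsIso f → f ≠ 0
    intro hiso h0
    subst h0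
    obtain ⟨v, hv⟩ := hnz
    apply hv
    have hinv := IsIso.inv_hom_id (0 : Y ⟶ V)
    have h1 := ConcreteCategory.congr_hom (congrArg Action.Hom.hom hinv) v
    simp only [Action.comp_hom, Action.id_hom] at h1
    have h2 : (0 : Y ⟶ V).hom ((inv (0 : Y ⟶ V)).hom v) = v := h1
    exact h2.symm
  · intro hfne
    have hhom_ne : f.hom ≠ 0 := fun h => hfne (by ext1; exact h)
    have hker : ∀ (g : G), ∀ x ∈ LinearMap.ker f.hom.hom.hom, Y.ρ g x ∈ LinearMap.ker f.hom.hom.hom := by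
      intro g x hx
      have hc := ConcreteCategory.congr_hom (f.comm g) x
      have h2 : f.hom (Y.ρ g x) = V.ρ g (f.hom x) := hc
      simp only [LinearMap.mem_ker] at hx ⊢
      have h3 : V.ρ g (f.hom x) = 0 := by rw [show f.hom x = 0 from hx]; exact map_zero _
      exact h2.trans h3
    have hkerbot : LinearMap.ker f.hom.hom.hom = ⊥ := by
      by_contra hne
      set i : subFDRep Y _ hker ⟶ Y := subIncl Y _ hker with hi
      have hcomp : i ≫ f = 0 ≫ f := by
        ext x
        show f.hom (i.hom x) = f.hom ((0 : subFDRep Y _ hker ⟶ Y).hom x)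
        have hker0 : f.hom (i.hom x) = 0 := LinearMap.mem_ker.mp x.2
        rw [hker0]
        symm
        have h0x : ((0 : subFDRep Y (LinearMap.ker f.hom.hom.hom) hker ⟶ Y).hom x : CoeSort.coe Y)
            = 0 := rfl
        rw [h0x, map_zero]
      have hz : i = 0 := (cancel_mono f).mp hcomp
      obtain ⟨u, huU, hune⟩ := Submodule.exists_mem_ne_zero_of_ne_bot hne
      apply hune
      have h3 : i.hom ⟨u, huU⟩ = (0 : Y) := by rw [hz]; rfl
      exact h3
    have hrange : ∀ (g : G), ∀ x ∈ LinearMap.range f.hom.hom.hom, V.ρ g x ∈ LinearMap.range f.hom.hom.hom := by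
      intro g x hx
      obtain ⟨y, rfl⟩ := hx
      have hc := ConcreteCategory.congr_hom (f.comm g) y
      have h2 : f.hom (Y.ρ g y) = V.ρ g (f.hom y) := hc
      exact ⟨Y.ρ g y, h2⟩
    have hrtop : LinearMap.range f.hom.hom.hom = ⊤ := by
      apply hirr _ hrange
      intro h
      apply hhom_ne
      ext y
      have hy : f.hom y ∈ LinearMap.range f.hom.hom.hom := ⟨y, rfl⟩
      rw [h] at hy
      exact hy
    have hbij : Function.Bijective f.hom :=
      ⟨LinearMap.ker_eq_bot.mp hkerbot, LinearMap.range_eq_top.mp hrtop⟩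
    let e : Y.V.obj ≃ₗ[ℂ] V.V.obj := LinearEquiv.ofBijective f.hom.hom.hom hbij
    have : IsIso f.hom := by
      refine ⟨FGModuleCat.ofHom (e.symm : V.V.obj →ₗ[ℂ] Y.V.obj), ?_, ?_⟩
      · ext x
        show e.symm (f.hom x) = x
        exact e.symm_apply_apply x
      · ext x
        show f.hom (e.symm x) = x
        exact e.apply_symm_apply x
    exact Action.isIso_of_hom_isIso f


theorem charDeg_character (V : FDRep ℂ G) : charDeg (FDRep.character V) = Module.finrank ℂ V := by
  unfold charDeg
  rw [FDRep.char_one]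
  simp

theorem charInner_ind_eq {P : Type} [Group P] [Fintype P] (R : Subgroup P) (V : FDRep ℂ P) :
    charInner P (charInd R fun _ => 1) (FDRep.character V)
      = (Nat.card R : ℂ)⁻¹ * ∑ r : R, (starRingEnd ℂ) (V.character r) := by
  classical
  unfold charInner charInd
  have hstep : ∀ g : P,
      ((Nat.card R : ℂ)⁻¹ * ∑ x : P, if h : x * g * x⁻¹ ∈ R then (1:ℂ) else 0)
        * (starRingEnd ℂ) (V.character g)
      = (Nat.card R : ℂ)⁻¹ * ∑ x : P,
          (if x * g * x⁻¹ ∈ R then (starRingEnd ℂ) (V.character (x * g * x⁻¹)) else 0) := by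
    intro g
    rw [mul_assoc, Finset.sum_mul]
    congr 1
    apply Finset.sum_congr rfl
    intro x _
    by_cases h : x * g * x⁻¹ ∈ R
    · simp [h, FDRep.char_conj]
    · simp [h]
  simp only [hstep]
  rw [← Finset.mul_sum, ← mul_assoc, mul_comm ((Nat.card P : ℂ)⁻¹), mul_assoc]
  congr 1
  rw [Finset.sum_comm]
  have hinner : ∀ x : P,
      (∑ g : P, if x * g * x⁻¹ ∈ R then (starRingEnd ℂ) (V.character (x * g * x⁻¹)) else 0)
        = ∑ r : R, (starRingEnd ℂ) (V.character r) := by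
    intro x
    have hbij : Function.Bijective (fun g : P => x * g * x⁻¹) := (MulAut.conj x).bijective
    calc (∑ g : P, if x * g * x⁻¹ ∈ R then (starRingEnd ℂ) (V.character (x * g * x⁻¹)) else 0)
        = ∑ h : P, if h ∈ R then (starRingEnd ℂ) (V.character h) else 0 :=
          Function.Bijective.sum_comp hbij
            (fun h => if h ∈ R then (starRingEnd ℂ) (V.character h) else 0)
      _ = ∑ r : R, (starRingEnd ℂ) (V.character r) := by
          rw [← Finset.sum_filter]
          exact Finset.sum_subtype _ (by simp) _
  simp only [hinner]
  rw [Finset.sum_const, Finset.card_univ, nsmul_eq_mul, Nat.card_eq_fintype_card,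
    ← mul_assoc, inv_mul_cancel₀, one_mul]
  simpa using Fintype.card_ne_zero (α := P)


theorem exists_fixed_vector {P : Type} [Group P] [Fintype P] (R : Subgroup P) (V : FDRep ℂ P)
    (h : charInner P (charInd R fun _ => 1) (FDRep.character V) ≠ 0) :
    ∃ v : V, v ≠ 0 ∧ ∀ r ∈ R, V.ρ r v = v := by
  classical
  rw [charInner_ind_eq] at h
  have hsum : (∑ r : R, V.character r) ≠ 0 := by
    intro h0
    apply h
    have : (∑ r : R, (starRingEnd ℂ) (V.character r)) = 0 := by
      rw [← map_sum, h0, map_zero]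
    rw [this, mul_zero]
  set ρ' : Representation ℂ R V := V.ρ.comp R.subtype with hρ'
  have : FiniteDimensional ℂ V := inferInstance
  set W' : FDRep ℂ R := FDRep.of ρ' with hW'
  haveI : Invertible (Fintype.card R : ℂ) := by
    apply invertibleOfNonzero
    simpa using Fintype.card_ne_zero (α := R)
  have havg := FDRep.average_char_eq_finrank_invariants W'
  have hchar : ∀ r : R, W'.character r = V.character r := fun r => rfl
  simp only [hchar] at havg
  have hfr : (Module.finrank ℂ (Representation.invariants W'.ρ) : ℂ) ≠ 0 := by
    rw [← havg]
    rw [Nat.card_eq_fintype_card]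
    intro h0
    apply hsum
    have hc : (Fintype.card R : ℂ) ≠ 0 := by simpa using Fintype.card_ne_zero (α := R)
    field_simp at h0
    simpa using h0
  have hne : Representation.invariants W'.ρ ≠ ⊥ := by
    intro h0
    rw [h0] at hfr
    simp at hfr
  obtain ⟨v, hv, hvne⟩ := Submodule.exists_mem_ne_zero_of_ne_bot hne
  refine ⟨v, hvne, ?_⟩
  intro r hr
  have := (Representation.mem_invariants W'.ρ v).mp hv ⟨r, hr⟩
  exact this


theorem key_dim_one {P : Type} [Group P] [Fintype P] {m : ℕ}
    (hm : IsLeast {d : ℕ | 1 < d ∧ ∃ χ : P → ℂ, IsIrrChar χ ∧ charDeg χ = d} m)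
    {R : Subgroup P} (hR : R.index ≤ m)
    (V : FDRep ℂ P) (hs : CategoryTheory.Simple V) (v : V) (hv : v ≠ 0)
    (hfix : ∀ r ∈ R, V.ρ r v = v) : Module.finrank ℂ V = 1 := by
  classical
  haveI : Fintype (P ⧸ R) := Fintype.ofFinite _
  set U : Submodule ℂ V := Submodule.span ℂ (Set.range fun g : P => V.ρ g v) with hU
  have hUinv : ∀ (g : P), ∀ x ∈ U, V.ρ g x ∈ U := by
    intro g x hx
    induction hx using Submodule.span_induction with
    | mem x hx =>
        obtain ⟨g', rfl⟩ := hx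
        refine Submodule.subset_span ⟨g * g', ?_⟩
        show V.ρ (g * g') v = V.ρ g (V.ρ g' v)
        rw [map_mul]; rfl
    | zero => simp
    | add x y _ _ hx hy => rw [map_add]; exact U.add_mem hx hy
    | smul c x _ hx => rw [map_smul]; exact U.smul_mem c hx
  have hUne : U ≠ ⊥ := by
    intro h0
    apply hv
    have hmem : v ∈ U := Submodule.subset_span ⟨1, by show V.ρ 1 v = v; rw [map_one]; rfl⟩
    rw [h0] at hmem; simpa using hmem
  have hUtop : U = ⊤ := eq_top_of_simple V hs U hUinv hUne
  have hwd : ∀ a b : P, (QuotientGroup.leftRel R) a b → V.ρ a v = V.ρ b v := by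
    intro a b hab
    have h1 : a⁻¹ * b ∈ R := QuotientGroup.leftRel_apply.mp hab
    have h2 : V.ρ a (V.ρ (a⁻¹ * b) v) = V.ρ (a * (a⁻¹ * b)) v := by
      conv_rhs => rw [map_mul]
      rfl
    rw [hfix _ h1, mul_inv_cancel_left] at h2
    exact h2
  set fbar : P ⧸ R → V := Quotient.lift (fun g : P => V.ρ g v) hwd with hfbar
  have hfbar_mk : ∀ g : P, fbar (QuotientGroup.mk g) = V.ρ g v := fun g => rfl
  have hrange : Set.range fbar = Set.range (fun g : P => V.ρ g v) := by
    ext x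
    constructor
    · rintro ⟨c, rfl⟩
      obtain ⟨g, rfl⟩ := Quotient.exists_rep c
      exact ⟨g, rfl⟩
    · rintro ⟨g, rfl⟩
      exact ⟨QuotientGroup.mk g, rfl⟩
  have hspan : Submodule.span ℂ (Set.range fbar) = ⊤ := by rw [hrange, ← hU, hUtop]
  haveI : Nontrivial V := nontrivial_of_ne v 0 hv
  have hdle : Module.finrank ℂ V ≤ Fintype.card (P ⧸ R) := by
    have h1 := finrank_span_le_card (R := ℂ) (Set.range fbar)
    rw [hspan, finrank_top] at h1
    exact h1.trans (by
      have := Set.toFinset_range fbar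
      rw [this]
      exact (Finset.card_image_le).trans (by simp))
  by_contra hne1
  have hd1 : 1 < Module.finrank ℂ V := by
    have := Module.finrank_pos (R := ℂ) (M := V)
    omega
  have hmem : Module.finrank ℂ V ∈ {d : ℕ | 1 < d ∧ ∃ χ : P → ℂ, IsIrrChar χ ∧ charDeg χ = d} :=
    ⟨hd1, V.character, ⟨V, hs, rfl⟩, charDeg_character V⟩
  have hmled : m ≤ Module.finrank ℂ V := hm.2 hmem
  have hindex : R.index = Nat.card (P ⧸ R) := Subgroup.index_eq_card R
  have hnc : Nat.card (P ⧸ R) = Fintype.card (P ⧸ R) := Nat.card_eq_fintype_card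
  have hcardeq : Fintype.card (P ⧸ R) = Module.finrank ℂ V := by omega
  have hli : LinearIndependent ℂ fbar :=
    linearIndependent_of_top_le_span_of_card_eq_finrank (le_of_eq hspan.symm) hcardeq
  set w : V := ∑ c : P ⧸ R, fbar c with hw
  have hfg : ∀ (g : P) (c : P ⧸ R), V.ρ g (fbar c) = fbar (g • c) := by
    intro g c
    obtain ⟨x, rfl⟩ := QuotientGroup.mk_surjective c
    have h1 : (g • (QuotientGroup.mk x : P ⧸ R)) = QuotientGroup.mk (g * x) := rfl
    rw [h1, hfbar_mk]
    show V.ρ g (V.ρ x v) = V.ρ (g * x) v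
    rw [map_mul]; rfl
  have hρw : ∀ g : P, V.ρ g w = w := by
    intro g
    rw [hw, map_sum]
    simp only [hfg]
    exact Fintype.sum_equiv (MulAction.toPerm g) _ _ (fun c => rfl)
  have hwne : w ≠ 0 := by
    intro h0
    have := Fintype.linearIndependent_iff.mp hli (fun _ => (1 : ℂ)) (by simpa using h0)
      (QuotientGroup.mk 1)
    simp at this
  have hWinv : ∀ (g : P), ∀ x ∈ Submodule.span ℂ {w}, V.ρ g x ∈ Submodule.span ℂ {w} := by
    intro g x hx
    obtain ⟨a, rfl⟩ := Submodule.mem_span_singleton.mp hx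
    rw [map_smul, hρw]
    exact Submodule.smul_mem _ a (Submodule.mem_span_singleton_self w)
  have hWne : Submodule.span ℂ {w} ≠ ⊥ := by
    simpa [Submodule.span_singleton_eq_bot] using hwne
  have hWtop := eq_top_of_simple V hs _ hWinv hWne
  have : Module.finrank ℂ V = 1 := by
    rw [← finrank_top ℂ V, ← hWtop]
    exact finrank_span_singleton hwne
  omega


section Perm

variable {P : Type} [Group P] [Fintype P] (R : Subgroup P)

/-- The permutation representation on `ℂ[P ⧸ R]`, realized on a Euclidean space. -/
def permρ : Representation ℂ P (EuclideanSpace ℂ (P ⧸ R)) where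
  toFun g :=
    { toFun := fun f => WithLp.toLp 2 (fun c => f (g⁻¹ • c))
      map_add' := fun f₁ f₂ => rfl
      map_smul' := fun t f => rfl }
  map_one' := by
    apply LinearMap.ext; intro f; ext c
    show f (1⁻¹ • c) = f c
    rw [inv_one, one_smul]
  map_mul' g h := by
    apply LinearMap.ext; intro f; ext c
    show f ((g * h)⁻¹ • c) = f (h⁻¹ • g⁻¹ • c)
    rw [mul_inv_rev, mul_smul]

theorem permρ_apply (g : P) (f : EuclideanSpace ℂ (P ⧸ R)) (c : P ⧸ R) :
    permρ R g f c = f (g⁻¹ • c) := rfl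

theorem permρ_inner (g : P) (x y : EuclideanSpace ℂ (P ⧸ R)) :
    inner ℂ (permρ R g x) (permρ R g y) = (inner ℂ x y : ℂ) := by
  rw [PiLp.inner_apply, PiLp.inner_apply]
  exact Fintype.sum_equiv (MulAction.toPerm (g⁻¹ : P)) _ _ (fun c => rfl)

theorem perp_invariant {W : Submodule ℂ (EuclideanSpace ℂ (P ⧸ R))}
    (hW : ∀ g : P, ∀ x ∈ W, permρ R g x ∈ W) :
    ∀ g : P, ∀ x ∈ Wᗮ, permρ R g x ∈ Wᗮ := by
  intro g x hx
  rw [Submodule.mem_orthogonal] at hx ⊢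
  intro u hu
  have hu' : permρ R g (permρ R g⁻¹ u) = u := by
    rw [← Module.End.mul_apply, ← map_mul, mul_inv_cancel, map_one, Module.End.one_apply]
  calc inner ℂ u (permρ R g x)
      = (inner ℂ (permρ R g (permρ R g⁻¹ u)) (permρ R g x) : ℂ) := by rw [hu']
    _ = inner ℂ (permρ R g⁻¹ u) x := permρ_inner R g _ _
    _ = 0 := hx _ (hW g⁻¹ u hu)

theorem proj_equivariant {W : Submodule ℂ (EuclideanSpace ℂ (P ⧸ R))}
    (hW : ∀ g : P, ∀ x ∈ W, permρ R g x ∈ W) (g : P) (x : EuclideanSpace ℂ (P ⧸ R)) :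
    (Submodule.orthogonalProjectionOnto W (permρ R g x) : EuclideanSpace ℂ (P ⧸ R))
      = permρ R g (Submodule.orthogonalProjectionOnto W x) := by
  apply Submodule.eq_starProjection_of_mem_orthogonal
  · exact hW g _ (Submodule.orthogonalProjectionOnto W x).2
  · have h1 : x - (Submodule.orthogonalProjectionOnto W x : EuclideanSpace ℂ (P ⧸ R)) ∈ Wᗮ :=
      Submodule.sub_starProjection_mem_orthogonal x
    have h2 := perp_invariant R hW g _ h1
    rw [map_sub] at h2
    exact h2

/-- The indicator vector of the trivial coset. -/
def eOne : EuclideanSpace ℂ (P ⧸ R) := EuclideanSpace.single (QuotientGroup.mk 1) 1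

theorem permρ_eOne (g : P) :
    permρ R g (eOne R) = EuclideanSpace.single (QuotientGroup.mk g) 1 := by
  ext c
  obtain ⟨x, rfl⟩ := QuotientGroup.mk_surjective c
  rw [permρ_apply]
  have h1 : (g⁻¹ • (QuotientGroup.mk x : P ⧸ R)) = QuotientGroup.mk (g⁻¹ * x) := rfl
  rw [h1]
  unfold eOne
  rw [EuclideanSpace.single_apply, EuclideanSpace.single_apply]
  congr 1
  simp only [eq_iff_iff]
  rw [QuotientGroup.eq, QuotientGroup.eq]
  constructor
  · intro h; simpa [mul_assoc] using h
  · intro h; simpa [mul_assoc] using h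

theorem eOne_fixed : ∀ r ∈ R, permρ R r (eOne R) = eOne R := by
  intro r hr
  rw [permρ_eOne]
  unfold eOne
  have h1 : (QuotientGroup.mk r : P ⧸ R) = QuotientGroup.mk 1 :=
    QuotientGroup.eq.mpr (by simpa using hr)
  rw [h1]

theorem span_singles_top :
    Submodule.span ℂ (Set.range fun c : P ⧸ R => (EuclideanSpace.single c 1 :
      EuclideanSpace ℂ (P ⧸ R))) = ⊤ := by
  have hb := (EuclideanSpace.basisFun (P ⧸ R) ℂ).toBasis.span_eq
  rw [← hb]
  congr 1
  ext x
  simp [OrthonormalBasis.coe_toBasis, EuclideanSpace.basisFun_apply]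

end Perm


theorem commutator_fix {P : Type} [Group P] [Fintype P] {m : ℕ}
    (hm : IsLeast {d : ℕ | 1 < d ∧ ∃ χ : P → ℂ, IsIrrChar χ ∧ charDeg χ = d} m)
    {R : Subgroup P} (hR : R.index ≤ m) :
    ∀ (n : ℕ) (W : Submodule ℂ (EuclideanSpace ℂ (P ⧸ R))),
      Module.finrank ℂ W ≤ n → (∀ g : P, ∀ x ∈ W, permρ R g x ∈ W) →
      ∀ (a b : P), ∀ x ∈ W, permρ R ⁅a, b⁆ x = x := by
  classical
  intro n
  induction n with
  | zero =>
    intro W hdim hinv a b x hx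
    have hW : W = ⊥ := Submodule.finrank_eq_zero.mp (Nat.le_zero.mp hdim)
    rw [hW] at hx
    simp only [Submodule.mem_bot] at hx
    rw [hx, map_zero]
  | succ n ih =>
    intro W hdim hinv a b x hx
    by_cases hWbot : W = ⊥
    · rw [hWbot] at hx; simp only [Submodule.mem_bot] at hx; rw [hx, map_zero]
    set S : Set ℕ := {k | ∃ U : Submodule ℂ (EuclideanSpace ℂ (P ⧸ R)),
        U ≤ W ∧ (∀ g : P, ∀ y ∈ U, permρ R g y ∈ U) ∧ U ≠ ⊥ ∧ Module.finrank ℂ U = k} with hS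
    have hSne : Module.finrank ℂ W ∈ S := ⟨W, le_rfl, hinv, hWbot, rfl⟩
    obtain ⟨W₀, hW₀W, hW₀inv, hW₀ne, hW₀rk⟩ := Nat.sInf_mem (⟨_, hSne⟩ : S.Nonempty)
    have hmin : ∀ U : Submodule ℂ (EuclideanSpace ℂ (P ⧸ R)), U ≤ W₀ →
        (∀ g : P, ∀ y ∈ U, permρ R g y ∈ U) → U ≠ ⊥ → U = W₀ := by
      intro U hle hUinv hUne
      have h1 : Module.finrank ℂ U ∈ S := ⟨U, hle.trans hW₀W, hUinv, hUne, rfl⟩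
      have h2 : sInf S ≤ Module.finrank ℂ U := Nat.sInf_le h1
      exact Submodule.eq_of_le_of_finrank_le hle (by rw [hW₀rk]; exact h2)
    set M : FDRep ℂ P := FDRep.of (permρ R) with hM
    set u : EuclideanSpace ℂ (P ⧸ R) :=
      (Submodule.orthogonalProjectionOnto W₀ (eOne R) : EuclideanSpace ℂ (P ⧸ R)) with hu
    have humem : u ∈ W₀ := (Submodule.orthogonalProjectionOnto W₀ (eOne R)).2
    have hufix : ∀ r ∈ R, permρ R r u = u := by
      intro r hr
      rw [hu, ← proj_equivariant R hW₀inv, eOne_fixed R r hr]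
    have hune : u ≠ 0 := by
      intro h0
      have hq : ∀ x : EuclideanSpace ℂ (P ⧸ R),
          (Submodule.orthogonalProjectionOnto W₀ x : EuclideanSpace ℂ (P ⧸ R)) = 0 := by
        intro y
        have hy' : y ∈ Submodule.span ℂ (Set.range fun c : P ⧸ R =>
            (EuclideanSpace.single c 1 : EuclideanSpace ℂ (P ⧸ R))) := by
          rw [span_singles_top]; trivial
        induction hy' using Submodule.span_induction with
        | mem z hz =>
            obtain ⟨c, rfl⟩ := hz
            obtain ⟨g, rfl⟩ := QuotientGroup.mk_surjective c
            show ((Submodule.orthogonalProjectionOnto W₀ (EuclideanSpace.single (QuotientGroup.mk g) 1)) :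
              EuclideanSpace ℂ (P ⧸ R)) = 0
            rw [← permρ_eOne, proj_equivariant R hW₀inv, ← hu, h0, map_zero]
        | zero => rw [map_zero]; rfl
        | add y z _ _ hy hz => rw [map_add, Submodule.coe_add, hy, hz, add_zero]
        | smul t y _ hy => rw [map_smul, Submodule.coe_smul, hy, smul_zero]
      obtain ⟨w, hwW, hwne⟩ := Submodule.exists_mem_ne_zero_of_ne_bot hW₀ne
      have h2 := hq w
      have h3 : (Submodule.orthogonalProjectionOnto W₀ w : EuclideanSpace ℂ (P ⧸ R)) = w := by
        have h4 := Submodule.orthogonalProjectionOnto_mem_subspace_eq_self (K := W₀) ⟨w, hwW⟩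
        exact congrArg Subtype.val h4
      rw [h3] at h2; exact hwne h2
    have hMW₀inv : ∀ g : P, ∀ y ∈ W₀, M.ρ g y ∈ W₀ := hW₀inv
    have hV0simple : CategoryTheory.Simple (subFDRep M W₀ hMW₀inv) := by
      apply simple_of_irreducible
      · obtain ⟨w, hwW, hwne⟩ := Submodule.exists_mem_ne_zero_of_ne_bot hW₀ne
        exact ⟨⟨w, hwW⟩, fun h => hwne (congrArg Subtype.val h)⟩
      · intro U' hU'inv hU'ne
        set U := Submodule.map W₀.subtype U' with hUdef
        have hUle : U ≤ W₀ := Submodule.map_subtype_le W₀ U'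
        have hUinv : ∀ g : P, ∀ y ∈ U, permρ R g y ∈ U := by
          intro g y hy
          obtain ⟨z, hz, rfl⟩ := hy
          exact ⟨(subFDRep M W₀ hMW₀inv).ρ g z, hU'inv g z hz, rfl⟩
        have hUne : U ≠ ⊥ := by
          obtain ⟨z, hzU, hzne⟩ := Submodule.exists_mem_ne_zero_of_ne_bot hU'ne
          intro h0
          have hmem2 : W₀.subtype z ∈ U := ⟨z, hzU, rfl⟩
          rw [h0] at hmem2
          simp only [Submodule.mem_bot] at hmem2
          apply hzne
          apply Subtype.ext
          exact hmem2
        have hUeq : U = W₀ := hmin U hUle hUinv hUne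
        have hmap : Submodule.map W₀.subtype U' = Submodule.map W₀.subtype ⊤ := by
          rw [← hUdef, hUeq, Submodule.map_top, Submodule.range_subtype]
        exact Submodule.map_injective_of_injective (Submodule.injective_subtype W₀) hmap
    have hrk1 : Module.finrank ℂ W₀ = 1 := by
      have hfix0 : ∀ r ∈ R, (subFDRep M W₀ hMW₀inv).ρ r ⟨u, humem⟩ = ⟨u, humem⟩ := by
        intro r hr
        apply Subtype.ext
        show permρ R r u = u
        exact hufix r hr
      have hu0 : (⟨u, humem⟩ : W₀) ≠ 0 := fun h => hune (congrArg Subtype.val h)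
      exact key_dim_one hm hR (subFDRep M W₀ hMW₀inv) hV0simple ⟨u, humem⟩ hu0 hfix0
    have hW₀span : Submodule.span ℂ {u} = W₀ := by
      apply Submodule.eq_of_le_of_finrank_le
      · rw [Submodule.span_le]; simpa using humem
      · rw [hrk1, finrank_span_singleton hune]
    have hscal : ∀ g : P, ∃ c : ℂ, permρ R g u = c • u := by
      intro g
      have h1 : permρ R g u ∈ W₀ := hW₀inv g u humem
      rw [← hW₀span] at h1
      obtain ⟨c, hc⟩ := Submodule.mem_span_singleton.mp h1
      exact ⟨c, hc.symm⟩
    have hmul : ∀ (g h : P) (cg ch : ℂ), permρ R g u = cg • u → permρ R h u = ch • u →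
        permρ R (g * h) u = (cg * ch) • u := by
      intro g h cg ch hg hh
      have h1 : permρ R (g * h) u = permρ R g (permρ R h u) := by rw [map_mul]; rfl
      rw [h1, hh, map_smul, hg, smul_smul, mul_comm]
    have hinv_c : ∀ (g : P) (c : ℂ), permρ R g u = c • u →
        ∃ c', permρ R g⁻¹ u = c' • u ∧ c * c' = 1 := by
      intro g c hg
      obtain ⟨c', hc'⟩ := hscal g⁻¹
      refine ⟨c', hc', ?_⟩
      have h1 : permρ R (g * g⁻¹) u = (c * c') • u := hmul _ _ _ _ hg hc'
      rw [mul_inv_cancel, map_one] at h1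
      have h2 : u = (c * c') • u := h1
      have h3 : (1 : ℂ) • u = (c * c') • u := by rw [one_smul]; exact h2
      exact (smul_left_injective ℂ hune h3).symm
    have hcomm_u : permρ R ⁅a, b⁆ u = u := by
      obtain ⟨ca, hca⟩ := hscal a
      obtain ⟨cb, hcb⟩ := hscal b
      obtain ⟨ca', hca', hcaca'⟩ := hinv_c a ca hca
      obtain ⟨cb', hcb', hcbcb'⟩ := hinv_c b cb hcb
      have h1 : permρ R (a * b * a⁻¹ * b⁻¹) u = (ca * cb * ca' * cb') • u :=
        hmul _ _ _ _ (hmul _ _ _ _ (hmul _ _ _ _ hca hcb) hca') hcb'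
      have h2 : ca * cb * ca' * cb' = 1 := by
        have h3 : ca * cb * ca' * cb' = (ca * ca') * (cb * cb') := by ring
        rw [h3, hcaca', hcbcb', one_mul]
      rw [commutatorElement_def, h1, h2, one_smul]
    have hsup : W₀ ⊔ (W₀ᗮ ⊓ W) = W := Submodule.sup_orthogonal_inf_of_hasOrthogonalProjection hW₀W
    set W₁ : Submodule ℂ (EuclideanSpace ℂ (P ⧸ R)) := W₀ᗮ ⊓ W with hW₁def
    have hW₁inv : ∀ g : P, ∀ y ∈ W₁, permρ R g y ∈ W₁ := by
      intro g y hy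
      exact ⟨perp_invariant R hW₀inv g y hy.1, hinv g y hy.2⟩
    have hW₁rank : Module.finrank ℂ W₁ ≤ n := by
      have hdisj : W₀ ⊓ W₁ = ⊥ := by
        rw [eq_bot_iff]
        intro z hz
        have : z ∈ W₀ ⊓ W₀ᗮ := ⟨hz.1, hz.2.1⟩
        rwa [Submodule.inf_orthogonal_eq_bot] at this
      have hadd := Submodule.finrank_sup_add_finrank_inf_eq W₀ W₁
      rw [show W₀ ⊔ W₁ = W from hsup, hdisj, finrank_bot] at hadd
      have h1 : 1 ≤ Module.finrank ℂ W₀ := by rw [hrk1]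
      omega
    obtain ⟨x₀, hx₀, x₁, hx₁, rfl⟩ := Submodule.mem_sup.mp (show x ∈ W₀ ⊔ W₁ by
      rw [hW₁def, hsup]; exact hx)
    rw [map_add]
    have hx₀u : permρ R ⁅a, b⁆ x₀ = x₀ := by
      have hmem : x₀ ∈ Submodule.span ℂ {u} := by rw [hW₀span]; exact hx₀
      obtain ⟨t, rfl⟩ := Submodule.mem_span_singleton.mp hmem
      rw [map_smul, hcomm_u]
    rw [hx₀u, ih W₁ hW₁rank hW₁inv a b x₁ hx₁]


/-- If `P` is a finite non-abelian `p`-group, `m(P)` the minimal non-linear irreducible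
character degree, and `R ≤ P` with `|P : R| ≤ m(P)`, then every irreducible constituent of
`(1_R)^P` is linear, `P' ≤ R`, and `R ⊴ P`. -/
theorem stmt_3 {P : Type} [Group P] [Fintype P] (p : ℕ) (hp : p.Prime)
    (hPp : IsPGroup p P) (hnab : ¬ ∀ a b : P, a * b = b * a)
    (m : ℕ) (hm : IsLeast {d : ℕ | 1 < d ∧ ∃ χ : P → ℂ, IsIrrChar χ ∧ charDeg χ = d} m)
    (R : Subgroup P) (hR : R.index ≤ m) :
    (∀ η : P → ℂ, IsIrrChar η → charInner P (charInd R fun _ => 1) η ≠ 0 → charDeg η = 1) ∧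
      commutator P ≤ R ∧ R.Normal := by
  classical
  have part1 : ∀ η : P → ℂ, IsIrrChar η →
      charInner P (charInd R fun _ => 1) η ≠ 0 → charDeg η = 1 := by
    intro η hη hne
    obtain ⟨V, hs, rfl⟩ := hη
    obtain ⟨v, hv, hfix⟩ := exists_fixed_vector R V hne
    rw [charDeg_character]
    exact key_dim_one hm hR V hs v hv hfix
  have hcomm : ∀ a b : P, ⁅a, b⁆ ∈ R := by
    intro a b
    have htopinv : ∀ g : P, ∀ x ∈ (⊤ : Submodule ℂ (EuclideanSpace ℂ (P ⧸ R))),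
        permρ R g x ∈ (⊤ : Submodule ℂ (EuclideanSpace ℂ (P ⧸ R))) := fun _ _ _ => trivial
    have h1 := commutator_fix hm hR (Module.finrank ℂ
        (⊤ : Submodule ℂ (EuclideanSpace ℂ (P ⧸ R)))) ⊤ le_rfl htopinv a b (eOne R) trivial
    rw [permρ_eOne] at h1
    unfold eOne at h1
    by_contra hab
    have h2 : (QuotientGroup.mk ⁅a, b⁆ : P ⧸ R) ≠ QuotientGroup.mk 1 := by
      intro h3
      apply hab
      have h5 := QuotientGroup.eq.mp h3
      rw [mul_one] at h5
      exact (Subgroup.inv_mem_iff R).mp h5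
    have h4 := congrFun (congrArg WithLp.ofLp h1) (QuotientGroup.mk ⁅a, b⁆)
    rw [EuclideanSpace.single_apply, EuclideanSpace.single_apply] at h4
    rw [if_pos rfl, if_neg h2] at h4
    exact one_ne_zero h4
  have part2 : commutator P ≤ R := by
    rw [commutator_def, Subgroup.commutator_le]
    intro g₁ _ g₂ _
    exact hcomm g₁ g₂
  refine ⟨part1, part2, ?_⟩
  constructor
  intro x hx g
  have h1 : ⁅g, x⁆ ∈ R := hcomm g x
  have h2 : g * x * g⁻¹ = ⁅g, x⁆ * x := by
    rw [commutatorElement_def, inv_mul_cancel_right]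
  rw [h2]
  exact R.mul_mem h1 hx
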